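/- Let L be the free graded Lie algebra over ℚ on generators χ₁, ..., χ_{m+1} of degrees 5, 9, ..., 4(m+1)+1 with m ≥ 3, truncated above degree 4m+5. Define automorphisms f and g by: f fixes all generators except χ_m, which it sends to χ_m + α₁[χ₁, χ_{m-1}] with α₁ ≠ 0; g fixes all generators except χ_{m+1}, which it sends to χ_{m+1} + α₂[χ₁, χ_m] with α₂ ≠ 0. Then (f ∘ g)(χ_{m+1}) = χ_{m+1} + α₂[χ₁, χ_m] + α₁α₂[χ₁,[χ₁,χ_{m-1}]] while (g ∘ f)(χ_{m+1}) = χ_{m+1} + α₂[χ₁, χ_m], and since [χ₁,[χ₁,χ_{m-1}]] ≠ 0 in the free graded Lie algebra, f ∘ g ≠ g ∘ f. Hence the automorphism group of L is non-abelian. -/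

import Mathlib

/-! Since `f` fixes `χ₁` and `χ_{m+1}` and preserves brackets, applying it to
`g(χ_{m+1}) = χ_{m+1} + α₂[χ₁,χ_m]` only moves the inner `χ_m`, which produces the extra term
`α₁α₂[χ₁,[χ₁,χ_{m-1}]]`; in the other order `f(χ_{m+1}) = χ_{m+1}` and no such term appears.
The extra term is nonzero since `[χ₁,[χ₁,χ_{m-1}]]` belongs to a linearly independent family. -/

section BracketPreserving

variable {R M F : Type*} [CommSemiring R] [AddCommMonoid M] [Module R M]
  [FunLike F M M] [LinearMapClass F R M M]

theorem map_add_smul_bracket (b : M →ₗ[R] M →ₗ[R] M) (φ : F)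
    (hφ : ∀ u v, φ (b u v) = b (φ u) (φ v)) {a c d z : M} {α β : R}
    (hz : φ z = z) (ha : φ a = a) (hc : φ c = c + α • b a d) :
    φ (z + β • b a c) = z + β • b a c + (α * β) • b a (b a d) := by
  rw [map_add, map_smul, hφ, hz, ha, hc, map_add, map_smul, smul_add, smul_smul, mul_comm β α,
    add_assoc]

end BracketPreserving

theorem LinearEquiv.trans_ne_trans_of_apply_ne {R M : Type*} [Semiring R] [AddCommMonoid M]
    [Module R M] {f g : M ≃ₗ[R] M} {x : M} (h : f (g x) ≠ g (f x)) : g.trans f ≠ f.trans g :=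
  fun e => h (LinearEquiv.congr_fun e x)

theorem stmt12_general (L : Type) [AddCommGroup L] [Module ℚ L]
    (b : L →ₗ[ℚ] L →ₗ[ℚ] L) (m : ℕ) (hm : 3 ≤ m) (χ : ℕ → L)
    (hindep : LinearIndependent ℚ
      ![χ (m+1), b (χ 1) (χ m), b (χ 1) (b (χ 1) (χ (m-1)))])
    (α₁ α₂ : ℚ) (hα₁ : α₁ ≠ 0) (hα₂ : α₂ ≠ 0)
    (f g : L ≃ₗ[ℚ] L)
    (hfb : ∀ u v : L, f (b u v) = b (f u) (f v))
    (hgb : ∀ u v : L, g (b u v) = b (g u) (g v))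
    (hf : ∀ i, 1 ≤ i → i ≤ m + 1 → i ≠ m → f (χ i) = χ i)
    (hfm : f (χ m) = χ m + α₁ • b (χ 1) (χ (m-1)))
    (hgm : g (χ (m+1)) = χ (m+1) + α₂ • b (χ 1) (χ m)) :
    f (g (χ (m+1)))
        = χ (m+1) + α₂ • b (χ 1) (χ m) + (α₁ * α₂) • b (χ 1) (b (χ 1) (χ (m-1))) ∧
    g (f (χ (m+1))) = χ (m+1) + α₂ • b (χ 1) (χ m) ∧
    g.trans f ≠ f.trans g ∧
    ∃ f' g' : {φ : L ≃ₗ[ℚ] L // ∀ u v : L, φ (b u v) = b (φ u) (φ v)},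
      f'.1.trans g'.1 ≠ g'.1.trans f'.1 := by
  have hf₁ : f (χ 1) = χ 1 := hf 1 le_rfl (by omega) (by omega)
  have hf_top : f (χ (m+1)) = χ (m+1) := hf (m+1) (by omega) le_rfl (by omega)
  have hfg : f (g (χ (m+1)))
      = χ (m+1) + α₂ • b (χ 1) (χ m) + (α₁ * α₂) • b (χ 1) (b (χ 1) (χ (m-1))) := by
    rw [hgm]
    exact map_add_smul_bracket b f hfb hf_top hf₁ hfm
  have hgf : g (f (χ (m+1))) = χ (m+1) + α₂ • b (χ 1) (χ m) := by
    rw [hf_top, hgm]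
  have hnested : b (χ 1) (b (χ 1) (χ (m-1))) ≠ 0 := by
    simpa using hindep.ne_zero 2
  have hne : g.trans f ≠ f.trans g := by
    refine LinearEquiv.trans_ne_trans_of_apply_ne (x := χ (m+1)) ?_
    rw [hfg, hgf, Ne, add_eq_left]
    exact smul_ne_zero (mul_ne_zero hα₁ hα₂) hnested
  exact ⟨hfg, hgf, hne, ⟨g, hgb⟩, ⟨f, hfb⟩, hne⟩

theorem stmt12 (L : Type) [AddCommGroup L] [Module ℚ L]
    (b : L →ₗ[ℚ] L →ₗ[ℚ] L) (m : ℕ) (hm : 3 ≤ m) (χ : ℕ → L)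
    (hindep : LinearIndependent ℚ
      ![χ (m+1), b (χ 1) (χ m), b (χ 1) (b (χ 1) (χ (m-1)))])
    (α₁ α₂ : ℚ) (hα₁ : α₁ ≠ 0) (hα₂ : α₂ ≠ 0)
    (f g : L ≃ₗ[ℚ] L)
    (hfb : ∀ u v : L, f (b u v) = b (f u) (f v))
    (hgb : ∀ u v : L, g (b u v) = b (g u) (g v))
    (hf : ∀ i, 1 ≤ i → i ≤ m + 1 → i ≠ m → f (χ i) = χ i)
    (hfm : f (χ m) = χ m + α₁ • b (χ 1) (χ (m-1)))
    (hg : ∀ i, 1 ≤ i → i ≤ m + 1 → i ≠ m + 1 → g (χ i) = χ i)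
    (hgm : g (χ (m+1)) = χ (m+1) + α₂ • b (χ 1) (χ m)) :
    f (g (χ (m+1)))
        = χ (m+1) + α₂ • b (χ 1) (χ m) + (α₁ * α₂) • b (χ 1) (b (χ 1) (χ (m-1))) ∧
    g (f (χ (m+1))) = χ (m+1) + α₂ • b (χ 1) (χ m) ∧
    g.trans f ≠ f.trans g ∧
    ∃ f' g' : {φ : L ≃ₗ[ℚ] L // ∀ u v : L, φ (b u v) = b (φ u) (φ v)},
      f'.1.trans g'.1 ≠ g'.1.trans f'.1 :=
  stmt12_general L b m hm χ hindep α₁ α₂ hα₁ hα₂ f g hfb hgb hf hfm hgm
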